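/- Let 1 ≤ s ≤ N, 1 ≤ k ≤ m, and A ∈ ℂ^{m×N}. Define σ_{s,k} = max over S ⊆ {1,…,N} with |S| = s and T ⊆ {1,…,m} with |T| = k of the spectral norm ‖A_{S,T}‖₂ of the submatrix A_{S,T} = (A_{ij})_{i∈T, j∈S}. Suppose A has the Restricted Isometry Property for sparse vectors of order s with constant δ_s < 1, and that σ_{s,k} < √(1 − δ_s). Then for all s-sparse x ∈ ℂ^N and k-sparse c ∈ ℂ^m, (1 − δ)(‖x‖₂² + ‖c‖₂²) ≤ ‖Ax + c‖₂² ≤ (1 + δ)(‖x‖₂² + ‖c‖₂²), where δ = (δ_s + √(δ_s² + 4σ_{s,k}²))/2; in particular A has the Restricted Isometry Property for the sparse corruptions problem of order (s,k) with constant δ_{s,k} ≤ δ. -/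

import Mathlib

open Finset Matrix MeasureTheory

noncomputable def l1norm {n : ℕ} (x : Fin n → ℂ) : ℝ := ∑ i, ‖x i‖

noncomputable def l2norm {n : ℕ} (x : Fin n → ℂ) : ℝ := Real.sqrt (∑ i, ‖x i‖ ^ 2)

/-- The vector equal to `x` on `S` and zero elsewhere. -/
def restr {n : ℕ} (x : Fin n → ℂ) (S : Finset (Fin n)) : Fin n → ℂ :=
  fun i => if i ∈ S then x i else 0

/-- `x` has at most `s` nonzero entries. -/
def IsSparse {n : ℕ} (s : ℕ) (x : Fin n → ℂ) : Prop :=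
  ∃ S : Finset (Fin n), S.card ≤ s ∧ ∀ i ∉ S, x i = 0

/-- Best `s`-term approximation error of `x` in the `ℓ¹` norm. -/
noncomputable def sigma1 {n : ℕ} (s : ℕ) (x : Fin n → ℂ) : ℝ :=
  sInf {t : ℝ | ∃ z : Fin n → ℂ, IsSparse s z ∧ t = l1norm (x - z)}

/-- `η_{s,k}(λ) = (s + λ²k)/min{s, λ²k}`. -/
noncomputable def etaSK (s k : ℕ) (lam : ℝ) : ℝ :=
  ((s : ℝ) + lam ^ 2 * k) / min (s : ℝ) (lam ^ 2 * k)

/-- The ℓ¹-robust null space property of order (s,k) with weight lam, constants ρ, τ. -/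
def L1RNSP {m N : ℕ} (A : Matrix (Fin m) (Fin N) ℂ) (s k : ℕ) (lam ρ τ : ℝ) : Prop :=
  ∀ (x : Fin N → ℂ) (c : Fin m → ℂ) (S : Finset (Fin N)) (T : Finset (Fin m)),
    S.card ≤ s → T.card ≤ k →
      l1norm (restr x S) + lam * l1norm (restr c T) ≤
        ρ * (l1norm (restr x Sᶜ) + lam * l1norm (restr c Tᶜ)) + τ * l2norm (A.mulVec x + c)

/-- The ℓ²-robust null space property of order (s,k) with weight lam, constants ρ, τ. -/
def L2RNSP {m N : ℕ} (A : Matrix (Fin m) (Fin N) ℂ) (s k : ℕ) (lam ρ τ : ℝ) : Prop :=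
  ∀ (x : Fin N → ℂ) (c : Fin m → ℂ) (S : Finset (Fin N)) (T : Finset (Fin m)),
    S.card ≤ s → T.card ≤ k →
      Real.sqrt (l2norm (restr x S) ^ 2 + l2norm (restr c T) ^ 2) ≤
        (ρ / Real.sqrt ((s : ℝ) + lam ^ 2 * k)) *
            (l1norm (restr x Sᶜ) + lam * l1norm (restr c Tᶜ)) +
          τ * l2norm (A.mulVec x + c)

/-- `A` satisfies the two-sided RIP inequality for the sparse corruptions problem of
order `(s,k)` with constant `δ`. -/
def RIPCor {m N : ℕ} (A : Matrix (Fin m) (Fin N) ℂ) (s k : ℕ) (δ : ℝ) : Prop :=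
  ∀ (x : Fin N → ℂ) (c : Fin m → ℂ), IsSparse s x → IsSparse k c →
    (1 - δ) * (l2norm x ^ 2 + l2norm c ^ 2) ≤ l2norm (A.mulVec x + c) ^ 2 ∧
      l2norm (A.mulVec x + c) ^ 2 ≤ (1 + δ) * (l2norm x ^ 2 + l2norm c ^ 2)

/-- `A` satisfies the RIP inequality for sparse vectors of order `s` with constant `δ`. -/
def RIPSparse {m N : ℕ} (A : Matrix (Fin m) (Fin N) ℂ) (s : ℕ) (δ : ℝ) : Prop :=
  ∀ x : Fin N → ℂ, IsSparse s x →
    (1 - δ) * l2norm x ^ 2 ≤ l2norm (A.mulVec x) ^ 2 ∧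
      l2norm (A.mulVec x) ^ 2 ≤ (1 + δ) * l2norm x ^ 2

/-- `(xh, ch)` is a minimizer of `‖z‖₁ + lam ‖d‖₁` subject to `‖Az + d - y‖₂ ≤ ε`. -/
def IsMinimizer {m N : ℕ} (A : Matrix (Fin m) (Fin N) ℂ) (y : Fin m → ℂ) (lam ε : ℝ)
    (xh : Fin N → ℂ) (ch : Fin m → ℂ) : Prop :=
  l2norm (A.mulVec xh + ch - y) ≤ ε ∧
    ∀ (z : Fin N → ℂ) (d : Fin m → ℂ), l2norm (A.mulVec z + d - y) ≤ ε →
      l1norm xh + lam * l1norm ch ≤ l1norm z + lam * l1norm d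

/-- Spectral norm of a matrix (operator norm w.r.t. Euclidean norms). -/
noncomputable def specNorm {a b : ℕ} (B : Matrix (Fin a) (Fin b) ℂ) : ℝ :=
  ‖LinearMap.toContinuousLinearMap (Matrix.toEuclideanLin B)‖

/-- `σ_{s,k}(A)`: the maximum spectral norm over `k × s` submatrices of `A`. -/
noncomputable def sigmaSK {m N : ℕ} (A : Matrix (Fin m) (Fin N) ℂ) (s k : ℕ) : ℝ :=
  sSup {t : ℝ | ∃ (S : Finset (Fin N)) (T : Finset (Fin m)) (hS : S.card = s) (hT : T.card = k),
    t = specNorm (A.submatrix (fun i : Fin k => ((T.orderIsoOfFin hT i : Fin m)))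
      (fun j : Fin s => ((S.orderIsoOfFin hS j : Fin N))))}

/-! Expand `‖Ax + c‖² = ‖Ax‖² + 2 Re ⟪Ax, c⟫ + ‖c‖²`. Restricted to the supports `S` of `x` and
`T` of `c`, the cross term is a bilinear form of the submatrix `A_{S,T}`, so
`|⟪Ax, c⟫| ≤ σ_{s,k} ‖x‖ ‖c‖`. For `δ` the nonnegative root of `δ (δ - δ_s) = σ_{s,k}²`, AM-GM gives
`2 σ_{s,k} ‖x‖ ‖c‖ ≤ (δ - δ_s) ‖x‖² + δ ‖c‖²`, which together with the RIP bounds on `‖Ax‖²`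
yields both inequalities. -/

open scoped InnerProductSpace

theorem two_mul_mul_le_of_sq_eq_mul {σ p q : ℝ} (hp : 0 ≤ p) (hq : 0 ≤ q) (h : σ ^ 2 = p * q)
    (a b : ℝ) : 2 * σ * (a * b) ≤ p * a ^ 2 + q * b ^ 2 := by
  rcases hp.eq_or_lt with rfl | hp
  · obtain rfl : σ = 0 := by simpa using h
    nlinarith
  · nlinarith [sq_nonneg (p * a - σ * b)]

theorem norm_add_sq_bounds_of_norm_inner_le {𝕜 E : Type*} [RCLike 𝕜] [SeminormedAddCommGroup E]
    [InnerProductSpace 𝕜 E] {y c : E} {a δs σ : ℝ} (hy_lower : (1 - δs) * a ^ 2 ≤ ‖y‖ ^ 2)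
    (hy_upper : ‖y‖ ^ 2 ≤ (1 + δs) * a ^ 2) (hyc : ‖⟪y, c⟫_𝕜‖ ≤ σ * (a * ‖c‖)) :
    (1 - (δs + √(δs ^ 2 + 4 * σ ^ 2)) / 2) * (a ^ 2 + ‖c‖ ^ 2) ≤ ‖y + c‖ ^ 2 ∧
      ‖y + c‖ ^ 2 ≤ (1 + (δs + √(δs ^ 2 + 4 * σ ^ 2)) / 2) * (a ^ 2 + ‖c‖ ^ 2) := by
  set t := √(δs ^ 2 + 4 * σ ^ 2)
  have ht : |δs| ≤ t := Real.abs_le_sqrt (by nlinarith)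
  have ht_sq : t ^ 2 = δs ^ 2 + 4 * σ ^ 2 := Real.sq_sqrt (by positivity)
  obtain ⟨ht_lower, ht_upper⟩ := abs_le.mp ht
  -- `(t - δs) / 2` and `(t + δs) / 2` are the roots `δ - δs` and `δ` of `(δ - δs) δ = σ²`
  have hcross : 2 * σ * (a * ‖c‖) ≤ (t - δs) / 2 * a ^ 2 + (δs + t) / 2 * ‖c‖ ^ 2 :=
    two_mul_mul_le_of_sq_eq_mul (by linarith) (by linarith) (by nlinarith) a ‖c‖
  obtain ⟨hre_lower, hre_upper⟩ := abs_le.mp ((RCLike.abs_re_le_norm _).trans hyc)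
  rw [norm_add_sq (𝕜 := 𝕜) y c]
  constructor <;> nlinarith

theorem IsSparse.exists_card_eq {n s : ℕ} {x : Fin n → ℂ} (hx : IsSparse s x) (hs : s ≤ n) :
    ∃ S : Finset (Fin n), S.card = s ∧ ∀ i ∉ S, x i = 0 := by
  obtain ⟨S₀, hS₀, hx⟩ := hx
  obtain ⟨S, hS₀S, hS⟩ := Finset.exists_superset_card_eq hS₀ (by simpa using hs)
  exact ⟨S, hS, fun i hi => hx i (fun h => hi (hS₀S h))⟩

theorem Matrix.mulVec_dotProduct_eq_submatrix {R ι κ m n : Type*} [Fintype ι] [Fintype κ]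
    [Fintype m] [Fintype n] [NonUnitalNonAssocSemiring R] (A : Matrix m n R) {r : κ → m}
    {q : ι → n} (hr : r.Injective) (hq : q.Injective) {x : n → R} {w : m → R}
    (hx : ∀ j ∉ Set.range q, x j = 0) (hw : ∀ i ∉ Set.range r, w i = 0) :
    A *ᵥ x ⬝ᵥ w = A.submatrix r q *ᵥ (x ∘ q) ⬝ᵥ (w ∘ r) := by
  have hrow : ∀ i, (A.submatrix r q *ᵥ (x ∘ q)) i = (A *ᵥ x) (r i) := fun i =>
    Fintype.sum_of_injective q hq _ _ (fun j hj => by simp [hx j hj]) (fun _ => rfl)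
  exact (Fintype.sum_of_injective r hr _ _ (fun i hi => by simp [hw i hi])
    (fun i => by simp [hrow])).symm

theorem l2norm_comp_of_injective {p n : ℕ} {q : Fin p → Fin n}
    (hq : q.Injective) {x : Fin n → ℂ} (hx : ∀ j ∉ Set.range q, x j = 0) :
    l2norm (x ∘ q) = l2norm x := by
  rw [l2norm, l2norm,
    Fintype.sum_of_injective q hq (fun i => ‖(x ∘ q) i‖ ^ 2) (fun j => ‖x j‖ ^ 2) (fun j hj => by simp [hx j hj])
      (fun _ => rfl)]

theorem l2norm_eq_norm_toLp {n : ℕ} (x : Fin n → ℂ) :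
    l2norm x = ‖(WithLp.toLp 2 x : EuclideanSpace ℂ (Fin n))‖ := by
  rw [EuclideanSpace.norm_eq]
  rfl

theorem norm_mulVec_dotProduct_star_le {a b : ℕ} (B : Matrix (Fin a) (Fin b) ℂ)
    (x : Fin b → ℂ) (w : Fin a → ℂ) : ‖B *ᵥ x ⬝ᵥ star w‖ ≤ specNorm B * (l2norm x * l2norm w) := by
  let toE {n : ℕ} (v : Fin n → ℂ) : EuclideanSpace ℂ (Fin n) := WithLp.toLp 2 v
  calc ‖B *ᵥ x ⬝ᵥ star w‖ = ‖⟪toE w, toE (B *ᵥ x)⟫_ℂ‖ := rfl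
    _ ≤ ‖toE w‖ * ‖toE (B *ᵥ x)‖ := norm_inner_le_norm _ _
    _ ≤ ‖toE w‖ * (specNorm B * ‖toE x‖) :=
      mul_le_mul_of_nonneg_left ((toEuclideanLin B).toContinuousLinearMap.le_opNorm _)
        (norm_nonneg _)
    _ = specNorm B * (l2norm x * l2norm w) := by
      rw [l2norm_eq_norm_toLp, l2norm_eq_norm_toLp]; ring

theorem specNorm_submatrix_le_sigmaSK {m N s k : ℕ} (A : Matrix (Fin m) (Fin N) ℂ)
    {S : Finset (Fin N)} {T : Finset (Fin m)} (hS : S.card = s) (hT : T.card = k) :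
    specNorm (A.submatrix (fun i : Fin k => ((T.orderIsoOfFin hT i : Fin m)))
      (fun j : Fin s => ((S.orderIsoOfFin hS j : Fin N)))) ≤ sigmaSK A s k := by
  refine le_csSup (Set.Finite.bddAbove ?_) ⟨S, T, hS, hT, rfl⟩
  refine (Set.finite_range fun p : {S : Finset (Fin N) // S.card = s} ×
      {T : Finset (Fin m) // T.card = k} =>
    specNorm (A.submatrix (fun i : Fin k => ((p.2.1.orderIsoOfFin p.2.2 i : Fin m)))
      (fun j : Fin s => ((p.1.1.orderIsoOfFin p.1.2 j : Fin N))))).subset ?_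
  rintro t ⟨S, T, hS, hT, rfl⟩
  exact ⟨(⟨S, hS⟩, ⟨T, hT⟩), rfl⟩

theorem norm_inner_mulVec_le_sigmaSK {m N s k : ℕ} (A : Matrix (Fin m) (Fin N) ℂ)
    (hsN : s ≤ N) (hkm : k ≤ m) {x : Fin N → ℂ} {c : Fin m → ℂ} (hx : IsSparse s x)
    (hc : IsSparse k c) :
    ‖⟪(WithLp.toLp 2 (A *ᵥ x) : EuclideanSpace ℂ (Fin m)), WithLp.toLp 2 c⟫_ℂ‖ ≤
      sigmaSK A s k * (l2norm x * l2norm c) := by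
  obtain ⟨S, hS, hxS⟩ := hx.exists_card_eq hsN
  obtain ⟨T, hT, hcT⟩ := hc.exists_card_eq hkm
  set q := S.orderEmbOfFin hS
  set r := T.orderEmbOfFin hT
  have hxq : ∀ j ∉ Set.range q, x j = 0 := fun j hj => hxS j (by simpa [q] using hj)
  have hcr : ∀ i ∉ Set.range r, c i = 0 := fun i hi => hcT i (by simpa [r] using hi)
  calc ‖⟪(WithLp.toLp 2 (A *ᵥ x) : EuclideanSpace ℂ (Fin m)), WithLp.toLp 2 c⟫_ℂ‖
      = ‖A *ᵥ x ⬝ᵥ star c‖ := norm_inner_symm _ _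
    _ = ‖A.submatrix r q *ᵥ (x ∘ q) ⬝ᵥ star (c ∘ r)‖ := by
      rw [A.mulVec_dotProduct_eq_submatrix r.injective q.injective hxq
        (fun i hi => by simp [hcr i hi])]
      rfl
    _ ≤ specNorm (A.submatrix r q) * (l2norm (x ∘ q) * l2norm (c ∘ r)) :=
      norm_mulVec_dotProduct_star_le _ _ _
    _ = specNorm (A.submatrix r q) * (l2norm x * l2norm c) := by
      rw [l2norm_comp_of_injective q.injective hxq, l2norm_comp_of_injective r.injective hcr]
    _ ≤ sigmaSK A s k * (l2norm x * l2norm c) := by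
      gcongr
      · exact mul_nonneg (Real.sqrt_nonneg _) (Real.sqrt_nonneg _)
      · exact specNorm_submatrix_le_sigmaSK A hS hT

theorem ripSparse_and_sigma_implies_ripCor_general {N m : ℕ} (s k : ℕ)
    (hsN : s ≤ N) (hkm : k ≤ m)
    (A : Matrix (Fin m) (Fin N) ℂ) (δs : ℝ)
    (hRIP : RIPSparse A s δs) :
    RIPCor A s k ((δs + Real.sqrt (δs ^ 2 + 4 * sigmaSK A s k ^ 2)) / 2) := by
  intro x c hx hc
  obtain ⟨hlower, hupper⟩ := hRIP x hx
  have hcross := norm_inner_mulVec_le_sigmaSK A hsN hkm hx hc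
  simp only [l2norm_eq_norm_toLp, WithLp.toLp_add] at hlower hupper hcross ⊢
  exact norm_add_sq_bounds_of_norm_inner_le hlower hupper hcross

/-- the RIP for sparse vectors plus a bound on submatrix spectral norms
implies the RIP for the sparse corruptions problem. -/
theorem ripSparse_and_sigma_implies_ripCor {N m : ℕ} (s k : ℕ)
    (hs1 : 1 ≤ s) (hsN : s ≤ N) (hk1 : 1 ≤ k) (hkm : k ≤ m)
    (A : Matrix (Fin m) (Fin N) ℂ) (δs : ℝ) (hδ0 : 0 ≤ δs) (hδ1 : δs < 1)
    (hRIP : RIPSparse A s δs)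
    (hσ : sigmaSK A s k < Real.sqrt (1 - δs)) :
    RIPCor A s k ((δs + Real.sqrt (δs ^ 2 + 4 * sigmaSK A s k ^ 2)) / 2) :=
  ripSparse_and_sigma_implies_ripCor_general s k hsN hkm A δs hRIP
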